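/- arXiv:math/0302309 — 2 statements merged into one kernel-verified Lean document; each statement's English description precedes it below -/
import Mathlib

section
/- Let (W,S) be a finite Coxeter system, I,J ⊆ S, and b ∈ X_{IJ} such that bJb^{-1} ⊆ I (i.e. btb^{-1} ∈ I for every t ∈ J, elements of S regarded as reflections). Then |W(I,J,b)| = |W(J,I,b^{-1})| = |W_I| / |W_J|. -/
open scoped Classical

variable {B : Type*} {W : Type*} [Group W] {M : CoxeterMatrix B}

/-- The parabolic subgroup `W_I` generated by the simple reflections indexed by `I`. -/
def parabolic (cs : CoxeterSystem M W) (I : Set B) : Subgroup W :=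
  Subgroup.closure (cs.simple '' I)

/-- `X_I`: minimal length coset representatives of `W / W_I`. -/
def minReps (cs : CoxeterSystem M W) (I : Set B) : Set W :=
  {w : W | ∀ i ∈ I, cs.length w < cs.length (w * cs.simple i)}

/-- `I ∼_W J`: the subsets of simple reflections are conjugate under `W`. -/
def ConjSubsets (cs : CoxeterSystem M W) (I J : Set B) : Prop :=
  ∃ w : W, (fun x => w * x * w⁻¹) '' (cs.simple '' I) = cs.simple '' J

theorem conjSubsets_equivalence (cs : CoxeterSystem M W) : Equivalence (ConjSubsets cs) where
  refl I := ⟨1, by simp⟩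
  symm := by
    rintro I J ⟨w, h⟩
    refine ⟨w⁻¹, ?_⟩
    rw [← h, Set.image_image]
    simp [mul_assoc]
  trans := by
    rintro I J K ⟨w, h⟩ ⟨v, h'⟩
    refine ⟨v * w, ?_⟩
    rw [← h', ← h]
    simp [Set.image_image, mul_assoc]

/-- The setoid of Coxeter classes. -/
def coxSetoid (cs : CoxeterSystem M W) : Setoid (Set B) :=
  ⟨ConjSubsets cs, conjSubsets_equivalence cs⟩

/-- The set of Coxeter classes `Λ(W)`. -/
def CoxeterClass (cs : CoxeterSystem M W) := Quotient (coxSetoid cs)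

/-- `C` is a conjugacy class of the parabolic subgroup `W_I`. -/
def IsConjClassOfParabolic (cs : CoxeterSystem M W) (I : Set B) (C : Set W) : Prop :=
  ∃ v ∈ parabolic cs I, C = {x : W | ∃ u ∈ parabolic cs I, u * v * u⁻¹ = x}

/-- `C` is an `I`-cuspidal class: a conjugacy class of `W_I` meeting no proper
parabolic subgroup of `W_I`. -/
def IsCuspidalClass (cs : CoxeterSystem M W) (I : Set B) (C : Set W) : Prop :=
  IsConjClassOfParabolic cs I C ∧ ∀ K : Set B, K ⊂ I → C ∩ (parabolic cs K : Set W) = ∅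

/-- `w` is an `I`-element: `C(w) ∩ W_I` is an `I`-cuspidal class. -/
def IsElementOf (cs : CoxeterSystem M W) (I : Set B) (w : W) : Prop :=
  IsCuspidalClass cs I ({x : W | IsConj w x} ∩ (parabolic cs I : Set W))

/-- The λ-set `C(λ)` of the Coxeter class of `I`: the set of `λ(I)`-elements. -/
def lambdaSet (cs : CoxeterSystem M W) (I : Set B) : Set W :=
  {w : W | ∃ J : Set B, ConjSubsets cs I J ∧ IsElementOf cs J w}

/-- The λ-set of a Coxeter class. -/
def lambdaSetQ (cs : CoxeterSystem M W) (lam : CoxeterClass cs) : Set W :=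
  {w : W | ∃ I : Set B, Quotient.mk (coxSetoid cs) I = lam ∧ IsElementOf cs I w}

/-- The induced character `1_{W_I}^W` of the trivial character of `W_I`,
as a `ℚ`-valued function on `W`. -/
noncomputable def indTriv (cs : CoxeterSystem M W) (I : Set B) : W → ℚ :=
  fun w => (Nat.card {g : W | g ∈ minReps cs I ∧ g⁻¹ * w * g ∈ parabolic cs I} : ℚ)

/-- `X_{IJ} = X_I⁻¹ ∩ X_J`: the minimal length representatives of the double cosets
`W_I \\ W / W_J`. -/
def doubleReps (cs : CoxeterSystem M W) (I J : Set B) : Set W :=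
  (minReps cs I)⁻¹ ∩ minReps cs J

/-- `W(I,J,b) = {w ∈ W | w^J b⁻¹ = (w b⁻¹)_I}`, expressed through the (unique) parabolic
components `w = u·c` (`u ∈ X_J`, `c ∈ W_J`) and `w b⁻¹ = p·q` (`p ∈ X_I`, `q ∈ W_I`). -/
def Wset (cs : CoxeterSystem M W) (I J : Set B) (b : W) : Set W :=
  {w : W | ∃ u c p q : W,
    u ∈ minReps cs J ∧ c ∈ parabolic cs J ∧ w = u * c ∧
    p ∈ minReps cs I ∧ q ∈ parabolic cs I ∧ w * b⁻¹ = p * q ∧ u * b⁻¹ = q}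

/-! Since `b W_J b⁻¹ ⊆ W_I`, the double-coset condition collapses: `w ∈ W(I,J,b)` exactly when
`w ∈ X_J` and `w b⁻¹ ∈ W_I`, and `w ∈ W(J,I,b⁻¹)` exactly when `w b ∈ X_J` and `b w ∈ W_I`.
Both `W_I b` and `b⁻¹ W_I b` are unions of left cosets of `W_J` with `|W_I|` elements, and every
left coset of `W_J` contains exactly one element of `X_J`, so both sets have `|W_I| / |W_J|`
elements. Uniqueness of the representative in `X_J` comes from the strong exchange condition,
which we derive from Tits' action of `W` on pairs (reflection, sign): there `s_i` sends `(t, ε)` to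
`(s_i t s_i, ε + [t = s_i])`, and the braid relations hold because the inversion sequence of a
relation word is periodic. -/

namespace CoxeterSystem

variable (cs : CoxeterSystem M W)

local prefix:100 "π" => cs.wordProd
local prefix:100 "ℓ" => cs.length

lemma list_prod_map_alternatingWord {G : Type*} [Monoid G] (f : B → G) (i j : B) (m : ℕ) :
    ((alternatingWord i j (2 * m)).map f).prod = (f i * f j) ^ m := by
  induction m with
  | zero => simp [alternatingWord]
  | succ m ih =>
    rw [show 2 * (m + 1) = 2 * m + 1 + 1 by ring, alternatingWord_succ', alternatingWord_succ',
      if_neg (by simp [parity_simps]), if_pos (even_two_mul m)]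
    simp only [List.map_cons, List.prod_cons, ih, pow_succ', mul_assoc]

lemma rightInvSeq_eq_leftInvSeq_of_wordProd_eq_one {ω : List B} (h : π ω = 1) :
    cs.rightInvSeq ω = cs.leftInvSeq ω := by
  refine List.ext_getElem (by simp) fun k hr hl => ?_
  have hris := cs.wordProd_mul_getD_rightInvSeq ω k
  have hlis := cs.getD_leftInvSeq_mul_wordProd ω k
  rw [h, one_mul] at hris
  rw [h, mul_one, ← hris] at hlis
  rw [← List.getD_eq_getElem _ 1 hr, ← List.getD_eq_getElem _ 1 hl, hlis]

/-- The inversion sequence of the relation word `(s_i s_j)^{m_ij}` is `m_ij`-periodic. -/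
lemma even_count_rightInvSeq_alternatingWord (i j : B) (t : W) :
    Even ((cs.rightInvSeq (alternatingWord i j (2 * M i j))).count t) := by
  have hπ : π (alternatingWord i j (2 * M i j)) = 1 := by
    simp [prod_alternatingWord_eq_mul_pow, cs.simple_mul_simple_pow]
  have hpow : (cs.simple j * cs.simple i) ^ M i j = 1 := by
    rw [M.symmetric]; exact cs.simple_mul_simple_pow j i
  rw [cs.rightInvSeq_eq_leftInvSeq_of_wordProd_eq_one hπ]
  generalize M i j = m at hpow
  set l := cs.leftInvSeq (alternatingWord i j (2 * m))
  have hperiod : l.take m = l.drop m := by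
    refine List.ext_getElem (by simp [l]; omega) fun k h₁ _ => ?_
    simp only [List.length_take, l, length_leftInvSeq, length_alternatingWord] at h₁
    rw [List.getElem_take, List.getElem_drop,
      cs.getElem_leftInvSeq_alternatingWord i j m _ (by omega),
      cs.getElem_leftInvSeq_alternatingWord i j m _ (by omega), prod_alternatingWord_eq_mul_pow,
      prod_alternatingWord_eq_mul_pow, show (2 * (m + k) + 1) / 2 = k + m by omega,
      show (2 * k + 1) / 2 = k by omega, pow_add, hpow, mul_one]
    simp
  rw [← List.take_append_drop m l, List.count_append, hperiod]
  exact ⟨_, rfl⟩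

noncomputable def simpleParityPerm (i : B) : Equiv.Perm (W × ZMod 2) :=
  Function.Involutive.toPerm
    (fun x => (cs.simple i * x.1 * cs.simple i, x.2 + if x.1 = cs.simple i then 1 else 0))
    (by
      rintro ⟨t, ε⟩
      by_cases h : t = cs.simple i
      · simp [h, add_assoc, CharTwo.add_self_eq_zero]
      · simp [h, mul_assoc, mul_eq_one_iff_eq_inv])

lemma simpleParityPerm_apply (i : B) (t : W) (ε : ZMod 2) :
    cs.simpleParityPerm i (t, ε) =
      (cs.simple i * t * cs.simple i, ε + if t = cs.simple i then 1 else 0) :=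
  rfl

lemma list_prod_map_simpleParityPerm_apply (ω : List B) (t : W) (ε : ZMod 2) :
    (ω.map cs.simpleParityPerm).prod (t, ε) =
      (π ω * t * (π ω)⁻¹, ε + (cs.rightInvSeq ω).count t) := by
  induction ω generalizing ε with
  | nil => simp
  | cons i ω ih =>
    have hconj : π ω * t * (π ω)⁻¹ = cs.simple i ↔ (π ω)⁻¹ * cs.simple i * π ω = t := by
      constructor <;> intro h
      · rw [← h]; group
      · rw [← h]; group
    rw [List.map_cons, List.prod_cons, Equiv.Perm.mul_apply, ih, simpleParityPerm_apply,
      rightInvSeq, List.count_cons, hconj]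
    simp [wordProd_cons, mul_assoc, add_assoc]

lemma isLiftable_simpleParityPerm : M.IsLiftable cs.simpleParityPerm := by
  intro i j
  rw [← list_prod_map_alternatingWord]
  ext ⟨t, ε⟩ : 1
  obtain ⟨c, hc⟩ := cs.even_count_rightInvSeq_alternatingWord i j t
  have hπ : π (alternatingWord i j (2 * M i j)) = 1 := by
    simp [prod_alternatingWord_eq_mul_pow, cs.simple_mul_simple_pow]
  simp [list_prod_map_simpleParityPerm_apply, hπ, hc, CharTwo.add_self_eq_zero]

noncomputable def parityAction : W →* Equiv.Perm (W × ZMod 2) :=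
  cs.lift ⟨cs.simpleParityPerm, cs.isLiftable_simpleParityPerm⟩

lemma parityAction_simple (i : B) : cs.parityAction (cs.simple i) = cs.simpleParityPerm i :=
  cs.lift_apply_simple cs.isLiftable_simpleParityPerm i

lemma parityAction_wordProd_apply (ω : List B) (t : W) (ε : ZMod 2) :
    cs.parityAction (π ω) (t, ε) = (π ω * t * (π ω)⁻¹, ε + (cs.rightInvSeq ω).count t) := by
  rw [wordProd, map_list_prod, List.map_map,
    show cs.parityAction ∘ cs.simple = cs.simpleParityPerm from funext cs.parityAction_simple,
    list_prod_map_simpleParityPerm_apply]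
  rfl

/-- The parity of the number of occurrences of `t` in the right inversion sequence of any word
for `w`; that it does not depend on the word is the content of `parityAction`. -/
noncomputable def inversionParity (w t : W) : ZMod 2 := (cs.parityAction w (t, 0)).2

lemma inversionParity_wordProd (ω : List B) (t : W) :
    cs.inversionParity (π ω) t = (cs.rightInvSeq ω).count t := by
  simp [inversionParity, parityAction_wordProd_apply]

lemma parityAction_apply (w t : W) (ε : ZMod 2) :
    cs.parityAction w (t, ε) = (w * t * w⁻¹, ε + cs.inversionParity w t) := by
  obtain ⟨ω, rfl⟩ := cs.wordProd_surjective w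
  rw [parityAction_wordProd_apply, inversionParity_wordProd]

lemma inversionParity_mul (v w t : W) :
    cs.inversionParity (v * w) t =
      cs.inversionParity w t + cs.inversionParity v (w * t * w⁻¹) := by
  have h := cs.parityAction_apply (v * w) t 0
  rw [map_mul, Equiv.Perm.mul_apply, parityAction_apply, parityAction_apply] at h
  simpa using (congrArg Prod.snd h).symm

lemma inversionParity_self {t : W} (ht : cs.IsReflection t) : cs.inversionParity t t = 1 := by
  obtain ⟨u, i, rfl⟩ := ht
  set t := u * cs.simple i * u⁻¹
  have hsimple : cs.inversionParity (cs.simple i) (cs.simple i) = 1 := by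
    simp [inversionParity, parityAction_simple, simpleParityPerm_apply]
  have hconj : u⁻¹ * t * u⁻¹⁻¹ = cs.simple i := by simp [t, mul_assoc]
  have hcancel := cs.inversionParity_mul u u⁻¹ t
  rw [mul_inv_cancel, hconj, show cs.inversionParity 1 t = 0 by simp [inversionParity]]
    at hcancel
  rw [inversionParity_mul, hconj, inversionParity_mul, hsimple, mul_inv_cancel_right]
  linear_combination -hcancel

lemma inversionParity_mul_self (w : W) {t : W} (ht : cs.IsReflection t) :
    cs.inversionParity (w * t) t = cs.inversionParity w t + 1 := by
  rw [inversionParity_mul, cs.inversionParity_self ht, ht.mul_self, one_mul, ht.inv, add_comm]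

lemma mem_rightInvSeq_of_length_mul_lt (ω : List B) {t : W} (ht : cs.IsReflection t)
    (hlt : ℓ (π ω * t) < ℓ (π ω)) : t ∈ cs.rightInvSeq ω := by
  by_contra hmem
  -- then `t` occurs an odd number of times in a reduced word of `π ω * t`, so it also shortens it
  have hzero : cs.inversionParity (π ω) t = 0 := by
    simp [inversionParity_wordProd, List.count_eq_zero_of_not_mem hmem]
  obtain ⟨ν, hν, hνω⟩ := cs.exists_isReduced (π ω * t)
  have hodd : (cs.rightInvSeq ν).count t = (1 : ZMod 2) := by
    rw [← inversionParity_wordProd, ← hνω, inversionParity_mul_self _ _ ht, hzero, zero_add]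
  have hmemν : t ∈ cs.rightInvSeq ν := by
    by_contra h
    simp [List.count_eq_zero_of_not_mem h] at hodd
  have := (cs.isRightInversion_of_mem_rightInvSeq hν hmemν).2
  rw [← hνω, mul_assoc, ht.mul_self, mul_one] at this
  omega

theorem exists_wordProd_eraseIdx_eq_mul (ω : List B) {t : W} (ht : cs.IsReflection t)
    (hlt : ℓ (π ω * t) < ℓ (π ω)) : ∃ k < ω.length, π (ω.eraseIdx k) = π ω * t := by
  obtain ⟨k, hk, rfl⟩ := List.getElem_of_mem (cs.mem_rightInvSeq_of_length_mul_lt ω ht hlt)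
  refine ⟨k, by simpa using hk, ?_⟩
  rw [← wordProd_mul_getD_rightInvSeq, List.getD_eq_getElem]

lemma simple_mem_parabolic {J : Set B} {j : B} (hj : j ∈ J) : cs.simple j ∈ parabolic cs J :=
  Subgroup.subset_closure ⟨j, hj, rfl⟩

lemma exists_isReduced_wordProd_mul_simple {J : Set B} {ω : List B} (hω : ∀ i ∈ ω, i ∈ J)
    (hred : cs.IsReduced ω) {j : B} (hj : j ∈ J) :
    ∃ ω' : List B, (∀ i ∈ ω', i ∈ J) ∧ cs.IsReduced ω' ∧ π ω' = π ω * cs.simple j := by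
  rcases cs.length_mul_simple (π ω) j with hlen | hlen
  · refine ⟨ω ++ [j], ?_, ?_, by rw [cs.wordProd_append, cs.wordProd_singleton]⟩
    · simpa [or_imp, forall_and] using ⟨hω, hj⟩
    · rw [CoxeterSystem.IsReduced, cs.wordProd_append, cs.wordProd_singleton, hlen, hred,
        List.length_append, List.length_singleton]
  · obtain ⟨k, hk, hπ⟩ :=
      cs.exists_wordProd_eraseIdx_eq_mul ω (cs.isReflection_simple j) (by omega)
    refine ⟨ω.eraseIdx k, fun i hi => hω i (List.mem_of_mem_eraseIdx hi), ?_, hπ⟩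
    rw [CoxeterSystem.IsReduced, hπ, List.length_eraseIdx_of_lt hk]
    have := hred.eq
    omega

lemma exists_isReduced_of_mem_parabolic {J : Set B} {w : W} (hw : w ∈ parabolic cs J) :
    ∃ ω : List B, (∀ i ∈ ω, i ∈ J) ∧ cs.IsReduced ω ∧ π ω = w := by
  induction hw using Subgroup.closure_induction_right with
  | one => exact ⟨[], by simp, by simp [CoxeterSystem.IsReduced], rfl⟩
  | mul_right x _ y hy ih =>
    obtain ⟨j, hj, rfl⟩ := hy
    obtain ⟨ω, hω, hred, rfl⟩ := ih
    exact cs.exists_isReduced_wordProd_mul_simple hω hred hj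
  | mul_inv_cancel x _ y hy ih =>
    obtain ⟨j, hj, rfl⟩ := hy
    obtain ⟨ω, hω, hred, rfl⟩ := ih
    rw [inv_simple]
    exact cs.exists_isReduced_wordProd_mul_simple hω hred hj

lemma exists_length_mul_simple_lt_of_mem_parabolic {J : Set B} {w : W}
    (hw : w ∈ parabolic cs J) (hne : w ≠ 1) : ∃ j ∈ J, ℓ (w * cs.simple j) < ℓ w := by
  obtain ⟨ω, hω, hred, rfl⟩ := cs.exists_isReduced_of_mem_parabolic hw
  obtain ⟨ω', j, rfl⟩ := (List.eq_nil_or_concat' ω).resolve_left (by rintro rfl; simp at hne)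
  refine ⟨j, hω j (by simp), ?_⟩
  have hle := cs.length_wordProd_le ω'
  rw [hred, cs.wordProd_append, cs.wordProd_singleton, simple_mul_simple_cancel_right]
  simp only [List.length_append, List.length_singleton]
  omega

lemma wordProd_mem_parabolic {J : Set B} {ω : List B} (hω : ∀ i ∈ ω, i ∈ J) :
    π ω ∈ parabolic cs J :=
  Subgroup.list_prod_mem _ (by simpa using fun i hi => cs.simple_mem_parabolic (hω i hi))

lemma length_mul_wordProd_mul_simple {J : Set B} {u : W}
    (hmin : ∀ c ∈ parabolic cs J, ℓ u ≤ ℓ (u * c)) {ω : List B} (hω : ∀ i ∈ ω, i ∈ J) {j : B}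
    (hj : j ∈ J) (hred : cs.IsReduced (ω ++ [j])) (hadd : ℓ (u * π ω) = ℓ u + ω.length) :
    ℓ (u * π ω * cs.simple j) = ℓ (u * π ω) + 1 := by
  -- Otherwise strong exchange, applied to a reduced word of `u` followed by `ω`, either
  -- shortens `u` within its coset `u W_J` or shortens the reduced word `ω ++ [j]`.
  refine (cs.length_mul_simple (u * π ω) j).resolve_right fun hdesc => ?_
  obtain ⟨μ, hμ, rfl⟩ := cs.exists_isReduced u
  obtain ⟨k, hk, hπ⟩ := cs.exists_wordProd_eraseIdx_eq_mul (μ ++ ω) (cs.isReflection_simple j)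
    (by rw [wordProd_append]; omega)
  rw [wordProd_append] at hπ
  rcases lt_or_ge k μ.length with hkμ | hkμ
  · rw [List.eraseIdx_append_of_lt_length hkμ, wordProd_append] at hπ
    have hc : π ω * cs.simple j * (π ω)⁻¹ ∈ parabolic cs J :=
      mul_mem (mul_mem (cs.wordProd_mem_parabolic hω) (cs.simple_mem_parabolic hj))
        (inv_mem (cs.wordProd_mem_parabolic hω))
    have hshort := hmin _ hc
    rw [show π μ * (π ω * cs.simple j * (π ω)⁻¹) = π (μ.eraseIdx k) by
      rw [eq_mul_inv_iff_mul_eq.mpr hπ]; group] at hshort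
    have := cs.length_wordProd_le (μ.eraseIdx k)
    rw [List.length_eraseIdx_of_lt hkμ, ← hμ.eq] at this
    have := hμ.eq
    omega
  · rw [List.eraseIdx_append_of_length_le hkμ, wordProd_append, mul_assoc] at hπ
    have hlen := cs.length_wordProd_le (ω.eraseIdx (k - μ.length))
    rw [mul_left_cancel hπ, ← cs.wordProd_singleton, ← wordProd_append, hred.eq] at hlen
    simp only [List.length_append, List.length_singleton, List.length_eraseIdx] at hlen hk
    split_ifs at hlen <;> omega

lemma length_mul_of_mem_parabolic {J : Set B} {u : W}
    (hmin : ∀ c ∈ parabolic cs J, ℓ u ≤ ℓ (u * c)) {x : W} (hx : x ∈ parabolic cs J) :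
    ℓ (u * x) = ℓ u + ℓ x := by
  obtain ⟨ω, hω, hred, rfl⟩ := cs.exists_isReduced_of_mem_parabolic hx
  rw [hred.eq]
  clear hx
  induction ω using List.reverseRecOn with
  | nil => simp
  | append_singleton ω j ih =>
    have hω' : ∀ i ∈ ω, i ∈ J := fun i hi => hω i (by simp [hi])
    have hred' : cs.IsReduced ω := by simpa using hred.take ω.length
    rw [wordProd_append, wordProd_singleton, ← mul_assoc,
      cs.length_mul_wordProd_mul_simple hmin hω' (hω j (by simp)) hred (ih hω' hred'),
      ih hω' hred', List.length_append, List.length_singleton, add_assoc]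

lemma exists_minimal_in_coset (J : Set B) (w : W) :
    ∃ u, u⁻¹ * w ∈ parabolic cs J ∧ ∀ c ∈ parabolic cs J, ℓ u ≤ ℓ (u * c) := by
  obtain ⟨c₀, hc₀, hmin⟩ :=
    (measure fun c => ℓ (w * c)).wf.has_min (parabolic cs J : Set W) ⟨1, one_mem _⟩
  refine ⟨w * c₀, by simpa using inv_mem hc₀, fun c hc => ?_⟩
  rw [mul_assoc]
  exact not_lt.mp (hmin (c₀ * c) (mul_mem hc₀ hc))

lemma mem_minReps_of_minimal {J : Set B} {u : W}
    (hmin : ∀ c ∈ parabolic cs J, ℓ u ≤ ℓ (u * c)) : u ∈ minReps cs J := fun j hj => by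
  rw [cs.length_mul_of_mem_parabolic hmin (cs.simple_mem_parabolic hj), length_simple]
  omega

lemma eq_of_minimal_of_mem_minReps {J : Set B} {u v : W}
    (hmin : ∀ c ∈ parabolic cs J, ℓ u ≤ ℓ (u * c)) (hv : v ∈ minReps cs J)
    (huv : u⁻¹ * v ∈ parabolic cs J) : v = u := by
  by_contra hne
  obtain ⟨j, hj, hdesc⟩ := cs.exists_length_mul_simple_lt_of_mem_parabolic huv
    (by rwa [ne_eq, inv_mul_eq_one, eq_comm])
  have hv₁ := cs.length_mul_of_mem_parabolic hmin huv
  have hv₂ := cs.length_mul_of_mem_parabolic hmin (mul_mem huv (cs.simple_mem_parabolic hj))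
  rw [mul_inv_cancel_left] at hv₁
  rw [← mul_assoc, mul_inv_cancel_left] at hv₂
  have := hv j hj
  omega

lemma exists_mem_minReps (J : Set B) (w : W) :
    ∃ u ∈ minReps cs J, u⁻¹ * w ∈ parabolic cs J :=
  let ⟨u, hu, hmin⟩ := cs.exists_minimal_in_coset J w
  ⟨u, cs.mem_minReps_of_minimal hmin, hu⟩

lemma eq_of_mem_minReps {J : Set B} {u v : W} (hu : u ∈ minReps cs J) (hv : v ∈ minReps cs J)
    (huv : u⁻¹ * v ∈ parabolic cs J) : u = v := by
  obtain ⟨m, hm, hmin⟩ := cs.exists_minimal_in_coset J u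
  have hmv : m⁻¹ * v ∈ parabolic cs J := by simpa [mul_assoc] using mul_mem hm huv
  rw [cs.eq_of_minimal_of_mem_minReps hmin hu hm, cs.eq_of_minimal_of_mem_minReps hmin hv hmv]

lemma one_mem_minReps (J : Set B) : (1 : W) ∈ minReps cs J := fun j _ => by simp

lemma card_eq_card_inter_minReps_mul {J : Set B} {A : Set W}
    (hA : ∀ a ∈ A, ∀ c ∈ parabolic cs J, a * c ∈ A) :
    Nat.card A = Nat.card ↥(A ∩ minReps cs J) * Nat.card (parabolic cs J) := by
  rw [← Nat.card_prod]
  refine (Nat.card_congr (Equiv.ofBijective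
    (fun uc : ↥(A ∩ minReps cs J) × parabolic cs J =>
      (⟨uc.1 * uc.2, hA _ uc.1.2.1 _ uc.2.2⟩ : A))
    ⟨?_, ?_⟩)).symm
  · rintro ⟨⟨u, hu⟩, c⟩ ⟨⟨u', hu'⟩, c'⟩ h
    have h : u * c = u' * c' := congrArg Subtype.val h
    obtain rfl : u = u' := cs.eq_of_mem_minReps hu.2 hu'.2 <| by
      rw [show u⁻¹ * u' = c * (c' : W)⁻¹ by
        rw [inv_mul_eq_iff_eq_mul, ← mul_assoc, h, mul_inv_cancel_right]]
      exact mul_mem c.2 (inv_mem c'.2)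
    obtain rfl : c = c' := Subtype.ext (mul_left_cancel h)
    rfl
  · rintro ⟨a, ha⟩
    obtain ⟨u, hu, hua⟩ := cs.exists_mem_minReps J a
    refine ⟨(⟨u, ?_, hu⟩, ⟨u⁻¹ * a, hua⟩), by simp⟩
    simpa using hA a ha _ (inv_mem hua)

end CoxeterSystem

section DoubleCosets

variable (cs : CoxeterSystem M W) {I J : Set B} {b : W}

lemma conj_mem_parabolic_of_conj_simple
    (hconj : ∀ j ∈ J, ∃ i ∈ I, b * cs.simple j * b⁻¹ = cs.simple i) :
    ∀ c ∈ parabolic cs J, b * c * b⁻¹ ∈ parabolic cs I := by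
  have hle : parabolic cs J ≤ (parabolic cs I).comap (MulAut.conj b).toMonoidHom := by
    refine (Subgroup.closure_le _).mpr ?_
    rintro _ ⟨j, hj, rfl⟩
    obtain ⟨i, hi, he⟩ := hconj j hj
    simpa [he] using cs.simple_mem_parabolic hi
  exact fun c hc => by simpa using hle hc

lemma Wset_eq_inter_minReps (hconj : ∀ c ∈ parabolic cs J, b * c * b⁻¹ ∈ parabolic cs I) :
    Wset cs I J b = {w | w * b⁻¹ ∈ parabolic cs I} ∩ minReps cs J := by
  ext w
  constructor
  · rintro ⟨u, c, p, _, hu, hc, rfl, hp, hq, hpq, rfl⟩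
    have hwb : u * c * b⁻¹ ∈ parabolic cs I := by
      rw [show u * c * b⁻¹ = u * b⁻¹ * (b * c * b⁻¹) by group]
      exact mul_mem hq (hconj c hc)
    obtain rfl : (1 : W) = p := cs.eq_of_mem_minReps (cs.one_mem_minReps I) hp <| by
      rw [inv_one, one_mul, show p = u * c * b⁻¹ * (u * b⁻¹)⁻¹ by rw [hpq, mul_inv_cancel_right]]
      exact mul_mem hwb (inv_mem hq)
    obtain rfl : c = 1 := by simpa using hpq
    rw [mul_one] at hwb ⊢
    exact ⟨hwb, hu⟩
  · rintro ⟨hwb, hw⟩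
    exact ⟨w, 1, 1, w * b⁻¹, hw, one_mem _, (mul_one w).symm, cs.one_mem_minReps I, hwb,
      (one_mul _).symm, rfl⟩

lemma Wset_inv_eq_image (hb : b⁻¹ ∈ minReps cs I)
    (hconj : ∀ c ∈ parabolic cs J, b * c * b⁻¹ ∈ parabolic cs I) :
    Wset cs J I b⁻¹ = (· * b⁻¹) '' ({x | b * x * b⁻¹ ∈ parabolic cs I} ∩ minReps cs J) := by
  ext w
  constructor
  · rintro ⟨u, c, p, q, hu, hc, rfl, hp, hq, hpq, hub⟩
    rw [inv_inv] at hpq hub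
    obtain rfl : u = b⁻¹ := cs.eq_of_mem_minReps hu hb <| by
      rw [show u⁻¹ * b⁻¹ = b * q⁻¹ * b⁻¹ by rw [← hub]; group]
      exact hconj _ (inv_mem hq)
    obtain rfl : q = 1 := by simpa using hub.symm
    refine ⟨b⁻¹ * c * b, ⟨by simpa [mul_assoc] using hc, by simpa [mul_assoc, hpq] using hp⟩,
      by group⟩
  · rintro ⟨x, ⟨hx, hxX⟩, rfl⟩
    exact ⟨b⁻¹, b * x * b⁻¹, x, 1, hb, hx, by group, hxX, one_mem _, by simp, by simp⟩

lemma card_Wset_mul_card_parabolic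
    (hconj : ∀ c ∈ parabolic cs J, b * c * b⁻¹ ∈ parabolic cs I) :
    Nat.card (Wset cs I J b) * Nat.card (parabolic cs J) = Nat.card (parabolic cs I) := by
  rw [Wset_eq_inter_minReps cs hconj, ← cs.card_eq_card_inter_minReps_mul]
  · exact Nat.card_congr ((Equiv.mulRight b⁻¹).subtypeEquiv fun _ => Iff.rfl)
  · intro a ha c hc
    rw [Set.mem_ofPred_eq, show a * c * b⁻¹ = a * b⁻¹ * (b * c * b⁻¹) by group]
    exact mul_mem ha (hconj c hc)

lemma card_Wset_inv_mul_card_parabolic (hb : b⁻¹ ∈ minReps cs I)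
    (hconj : ∀ c ∈ parabolic cs J, b * c * b⁻¹ ∈ parabolic cs I) :
    Nat.card (Wset cs J I b⁻¹) * Nat.card (parabolic cs J) = Nat.card (parabolic cs I) := by
  rw [Wset_inv_eq_image cs hb hconj, Nat.card_image_of_injective (mul_left_injective b⁻¹),
    ← cs.card_eq_card_inter_minReps_mul]
  · exact Nat.card_congr ((MulAut.conj b).toEquiv.subtypeEquiv fun _ => Iff.rfl)
  · intro a ha c hc
    rw [Set.mem_ofPred_eq, show b * (a * c) * b⁻¹ = b * a * b⁻¹ * (b * c * b⁻¹) by group]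
    exact mul_mem ha (hconj c hc)

end DoubleCosets

/-- If `b ∈ X_{IJ}` and `bJb⁻¹ ⊆ I` then
`|W(I,J,b)| = |W(J,I,b⁻¹)| = |W_I| / |W_J|`. -/
theorem statement17 [Fintype W] (cs : CoxeterSystem M W) (I J : Set B) (b : W)
    (hb : b ∈ doubleReps cs I J)
    (hconj : ∀ j ∈ J, ∃ i ∈ I, b * cs.simple j * b⁻¹ = cs.simple i) :
    Nat.card (Wset cs I J b) = Nat.card (Wset cs J I b⁻¹) ∧
    (Nat.card (Wset cs I J b) : ℚ)
      = (Nat.card (parabolic cs I) : ℚ) / (Nat.card (parabolic cs J) : ℚ) := by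
  have hconjP := conj_mem_parabolic_of_conj_simple cs hconj
  have h₁ := card_Wset_mul_card_parabolic cs hconjP
  have h₂ := card_Wset_inv_mul_card_parabolic cs hb.1 hconjP
  have hJ : 0 < Nat.card (parabolic cs J) := Nat.card_pos
  refine ⟨Nat.eq_of_mul_eq_mul_right hJ (h₁.trans h₂.symm), ?_⟩
  rw [eq_div_iff (by positivity), ← Nat.cast_mul, h₁]
end

section
/- Let (W,S) be a finite Coxeter system with |S| = 2 (so W is a finite dihedral group). Then for all I,J ⊆ S and all b ∈ X_{IJ}, |W(I,J,b)| = |W(J,I,b^{-1})|. -/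
/-!
If `I` or `J` is empty, `W(I,J,b)` is a one-sided coset `b W_J` or `W_I b`; if `I` or `J` is all
of `S`, then `b = 1` and both sides equal `X_J` resp. `X_I`. The remaining case is `I = {x}`,
`J = {y}`. The automorphism `φ` of `W` exchanging `s_x` and `s_y` preserves length, so it maps
`W({x},{y},b)` bijectively onto `W({y},{x},φ b)`. Finally `φ b = b⁻¹`: both have the length of `b`
and neither has `s_y` as a left descent, and in a dihedral group these two data determine an
element.
-/

open scoped Classical

variable {B : Type*} {W : Type*} [Group W] {M : CoxeterMatrix B}

section DiagramMap

open CoxeterSystem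

variable (cs : CoxeterSystem M W) {φ : W →* W} {σ : B → B}

theorem map_wordProd_of_map_simple (hφ : ∀ a, φ (cs.simple a) = cs.simple (σ a))
    (ω : List B) : φ (cs.wordProd ω) = cs.wordProd (ω.map σ) := by
  simp only [wordProd, map_list_prod, List.map_map]
  exact congrArg List.prod (List.map_congr_left fun a _ => hφ a)

theorem length_map_le_of_map_simple (hφ : ∀ a, φ (cs.simple a) = cs.simple (σ a)) (w : W) :
    cs.length (φ w) ≤ cs.length w := by
  obtain ⟨ω, hω, rfl⟩ := cs.exists_isReduced w
  rw [map_wordProd_of_map_simple cs hφ, hω.eq, ← List.length_map σ]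
  exact cs.length_wordProd_le _

theorem map_map_of_involutive (hφ : ∀ a, φ (cs.simple a) = cs.simple (σ a))
    (hσ : Function.Involutive σ) (w : W) : φ (φ w) = w :=
  DFunLike.congr_fun (cs.ext_simple (φ₁ := φ.comp φ) (φ₂ := MonoidHom.id W)
    fun a => by simp [hφ, hσ a]) w

theorem length_map_of_involutive (hφ : ∀ a, φ (cs.simple a) = cs.simple (σ a))
    (hσ : Function.Involutive σ) (w : W) : cs.length (φ w) = cs.length w := by
  refine le_antisymm (length_map_le_of_map_simple cs hφ w) ?_
  conv_lhs => rw [← map_map_of_involutive cs hφ hσ w]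
  exact length_map_le_of_map_simple cs hφ (φ w)

theorem map_mem_parabolic (hφ : ∀ a, φ (cs.simple a) = cs.simple (σ a)) {I : Set B} {w : W}
    (hw : w ∈ parabolic cs I) : φ w ∈ parabolic cs (σ '' I) := by
  have hmap : (parabolic cs I).map φ = parabolic cs (σ '' I) := by
    rw [parabolic, parabolic, MonoidHom.map_closure, Set.image_image, Set.image_image]
    simp only [hφ]
  exact hmap ▸ Subgroup.mem_map_of_mem φ hw

theorem map_mem_minReps (hφ : ∀ a, φ (cs.simple a) = cs.simple (σ a))
    (hℓ : ∀ w, cs.length (φ w) = cs.length w) {I : Set B} {w : W}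
    (hw : w ∈ minReps cs I) : φ w ∈ minReps cs (σ '' I) := by
  rintro _ ⟨i, hi, rfl⟩
  rw [← hφ, ← map_mul, hℓ, hℓ]
  exact hw i hi

theorem mapsTo_Wset (hφ : ∀ a, φ (cs.simple a) = cs.simple (σ a))
    (hℓ : ∀ w, cs.length (φ w) = cs.length w) (I J : Set B) (b : W) :
    Set.MapsTo φ (Wset cs I J b) (Wset cs (σ '' I) (σ '' J) (φ b)) := by
  rintro w ⟨u, c, p, q, hu, hc, rfl, hp, hq, hpq, rfl⟩
  refine ⟨φ u, φ c, φ p, φ (u * b⁻¹), map_mem_minReps cs hφ hℓ hu, map_mem_parabolic cs hφ hc,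
    map_mul φ u c, map_mem_minReps cs hφ hℓ hp, map_mem_parabolic cs hφ hq, ?_, ?_⟩ <;>
  simp [← map_inv, ← map_mul, hpq]

theorem card_Wset_image_eq (hφ : ∀ a, φ (cs.simple a) = cs.simple (σ a))
    (hσ : Function.Involutive σ) (I J : Set B) (b : W) :
    Nat.card (Wset cs (σ '' I) (σ '' J) (φ b)) = Nat.card (Wset cs I J b) := by
  have hφφ := map_map_of_involutive cs hφ hσ
  have hℓ := length_map_of_involutive cs hφ hσ
  have hback := mapsTo_Wset cs hφ hℓ (σ '' I) (σ '' J) (φ b)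
  simp only [Set.image_image, hσ _, Set.image_id', hφφ] at hback
  have himage : φ '' Wset cs I J b = Wset cs (σ '' I) (σ '' J) (φ b) :=
    (mapsTo_Wset cs hφ hℓ I J b).image_subset.antisymm
      fun w hw => ⟨φ w, hback hw, hφφ w⟩
  rw [← himage, Nat.card_image_of_injective (Function.LeftInverse.injective hφφ)]

end DiagramMap

section DegenerateParabolics

variable (cs : CoxeterSystem M W)

theorem parabolic_empty : parabolic cs ∅ = ⊥ := by
  rw [parabolic, Set.image_empty, Subgroup.closure_empty]

theorem parabolic_univ : parabolic cs Set.univ = ⊤ := by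
  rw [parabolic, Set.image_univ, cs.subgroup_closure_range_simple]

theorem one_mem_minReps (I : Set B) : (1 : W) ∈ minReps cs I := fun i _ => by
  simp [cs.length_simple]

theorem minReps_empty : minReps cs ∅ = Set.univ := by
  simp [minReps]

theorem minReps_univ : minReps cs Set.univ = {1} := by
  refine Set.eq_singleton_iff_unique_mem.2 ⟨one_mem_minReps cs _, fun w hw => ?_⟩
  by_contra hw1
  obtain ⟨i, hi⟩ := cs.exists_rightDescent_of_ne_one hw1
  exact (hw i trivial).not_gt hi

theorem Wset_empty_left {J : Set B} {b : W} (hb : b ∈ minReps cs J) :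
    Wset cs ∅ J b = (b * ·) '' parabolic cs J := by
  ext w
  constructor
  · rintro ⟨u, c, -, -, -, hc, rfl, -, hq, -, rfl⟩
    rw [parabolic_empty, Subgroup.mem_bot, mul_inv_eq_one] at hq
    exact ⟨c, hc, hq ▸ rfl⟩
  · rintro ⟨c, hc, rfl⟩
    refine ⟨b, c, b * c * b⁻¹, 1, hb, hc, rfl, ?_, Subgroup.one_mem _, by simp, by simp⟩
    simp [minReps_empty]

theorem Wset_empty_right {I : Set B} {b : W} :
    Wset cs I ∅ b = (· * b) '' parabolic cs I := by
  ext w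
  constructor
  · rintro ⟨u, c, -, -, -, hc, rfl, -, hq, -, rfl⟩
    rw [parabolic_empty, Subgroup.mem_bot] at hc
    exact ⟨u * b⁻¹, hq, by simp [hc]⟩
  · rintro ⟨q, hq, rfl⟩
    refine ⟨q * b, 1, 1, q, by simp [minReps_empty], Subgroup.one_mem _, by simp,
      one_mem_minReps cs I, hq, by simp, by simp⟩

theorem Wset_univ_left (J : Set B) : Wset cs Set.univ J 1 = minReps cs J := by
  ext w
  constructor
  · rintro ⟨u, c, p, q, hu, hc, rfl, hp, -, hpq, rfl⟩
    rw [minReps_univ, Set.mem_singleton_iff] at hp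
    subst hp
    simp_all
  · intro hw
    refine ⟨w, 1, 1, w, hw, Subgroup.one_mem _, by simp, one_mem_minReps cs _, ?_, by simp,
      by simp⟩
    simp [parabolic_univ]

theorem Wset_univ_right (I : Set B) : Wset cs I Set.univ 1 = minReps cs I := by
  ext w
  constructor
  · rintro ⟨u, c, p, q, hu, -, rfl, hp, -, hpq, rfl⟩
    rw [minReps_univ, Set.mem_singleton_iff] at hu
    subst hu
    simp_all
  · intro hw
    refine ⟨1, w, w, 1, one_mem_minReps cs _, ?_, by simp, hw, Subgroup.one_mem _, by simp,
      by simp⟩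
    simp [parabolic_univ]

end DegenerateParabolics

section RankTwo

open CoxeterSystem

theorem eq_of_ne_of_ne_of_card_eq_two (hS : Nat.card B = 2) {x a a' : B} (ha : a ≠ x)
    (ha' : a' ≠ x) : a = a' :=
  ((Nat.card_eq_two_iff' x).1 hS).unique ha ha'

theorem eq_empty_or_singleton_or_univ (hS : Nat.card B = 2) (I : Set B) :
    I = ∅ ∨ (∃ x, I = {x}) ∨ I = Set.univ := by
  have : Finite B := Nat.finite_of_card_ne_zero (by omega)
  have hle : I.ncard ≤ 2 := hS ▸ Set.ncard_le_card I
  interval_cases h : I.ncard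
  · exact Or.inl ((Set.ncard_eq_zero).1 h)
  · exact Or.inr (Or.inl (Set.ncard_eq_one.1 h))
  · exact Or.inr (Or.inr (Set.eq_of_subset_of_ncard_le (Set.subset_univ I)
      (by rw [Set.ncard_univ, hS, h])))

theorem CoxeterMatrix.apply_perm_of_card_eq_two (M : CoxeterMatrix B) (hS : Nat.card B = 2)
    (σ : Equiv.Perm B) (a a' : B) : M (σ a) (σ a') = M a a' := by
  rcases eq_or_ne a a' with rfl | h
  · simp
  have hσ : σ a ≠ σ a' := σ.injective.ne h
  rcases eq_or_ne (σ a) a with h₁ | h₁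
  · have h₂ : σ a' = a' := eq_of_ne_of_ne_of_card_eq_two hS (x := a)
      (fun h' => hσ (h₁.trans h'.symm)) h.symm
    rw [h₁, h₂]
  · have h₂ : σ a = a' := eq_of_ne_of_ne_of_card_eq_two hS h₁ h.symm
    have h₃ : σ a' = a := eq_of_ne_of_ne_of_card_eq_two hS (x := a')
      (fun h' => hσ (h₂.trans h'.symm)) h
    rw [h₂, h₃, M.symmetric]

variable (cs : CoxeterSystem M W)

/-- In rank two the letters of a reduced word alternate, so a reduced word of an element with no
left descent `x` is determined by its length. -/
theorem eq_of_length_eq_of_not_isLeftDescent (hS : Nat.card B = 2) {x : B} {u v : W}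
    (hu : ¬ cs.IsLeftDescent u x) (hv : ¬ cs.IsLeftDescent v x) (huv : cs.length u = cs.length v) :
    u = v := by
  induction h : cs.length u generalizing u v x with
  | zero => rw [cs.length_eq_zero_iff.1 h, cs.length_eq_zero_iff.1 (huv.symm.trans h)]
  | succ n ih =>
    obtain ⟨z, hz⟩ := cs.exists_leftDescent_of_ne_one (w := u) (by rintro rfl; simp at h)
    obtain ⟨z', hz'⟩ := cs.exists_leftDescent_of_ne_one (w := v) (by rintro rfl; simp [huv] at h)
    obtain rfl : z' = z := eq_of_ne_of_ne_of_card_eq_two hS (x := x)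
      (by rintro rfl; exact hv hz') (by rintro rfl; exact hu hz)
    have hlen : cs.length (cs.simple z' * u) = n := by
      have := cs.isLeftDescent_iff.1 hz; omega
    have hlen' : cs.length (cs.simple z' * v) = n := by
      have := cs.isLeftDescent_iff.1 hz'; omega
    exact mul_left_cancel (ih (cs.isLeftDescent_iff_not_isLeftDescent_mul.1 hz)
      (cs.isLeftDescent_iff_not_isLeftDescent_mul.1 hz') (hlen.trans hlen'.symm) hlen)

theorem mem_minReps_singleton_iff {w : W} {i : B} :
    w ∈ minReps cs {i} ↔ ¬ cs.IsRightDescent w i := by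
  have := cs.length_mul_simple_ne w i
  simp only [minReps, Set.mem_singleton_iff, forall_eq, IsRightDescent]
  exact ⟨fun h => h.not_gt, fun h => lt_of_le_of_ne (not_lt.1 h) this.symm⟩

noncomputable def swapHom (hS : Nat.card B = 2) (x y : B) : W →* W :=
  cs.lift ⟨fun a => cs.simple (Equiv.swap x y a), fun a a' => by
    rw [← M.apply_perm_of_card_eq_two hS (Equiv.swap x y) a a']
    exact cs.simple_mul_simple_pow _ _⟩

theorem swapHom_simple (hS : Nat.card B = 2) (x y a : B) :
    swapHom cs hS x y (cs.simple a) = cs.simple (Equiv.swap x y a) :=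
  cs.lift_apply_simple _ a

theorem swapHom_of_mem_doubleReps (hS : Nat.card B = 2) {x y : B} {b : W}
    (hb : b ∈ doubleReps cs {x} {y}) : swapHom cs hS x y b = b⁻¹ := by
  have hℓ := length_map_of_involutive cs (swapHom_simple cs hS x y) (Equiv.swap_apply_self x y)
  have hbx : ¬ cs.IsLeftDescent b x := by
    simpa [isRightDescent_inv_iff] using (mem_minReps_singleton_iff cs).1 hb.1
  have hby : ¬ cs.IsRightDescent b y := (mem_minReps_singleton_iff cs).1 hb.2
  refine eq_of_length_eq_of_not_isLeftDescent cs hS (x := y) ?_ ?_ (by rw [hℓ, cs.length_inv])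
  · have hy : cs.simple y = swapHom cs hS x y (cs.simple x) := by
      rw [swapHom_simple, Equiv.swap_apply_left]
    rwa [IsLeftDescent, hy, ← map_mul, hℓ, hℓ]
  · rwa [isLeftDescent_inv_iff]

theorem card_Wset_singleton (hS : Nat.card B = 2) {x y : B} {b : W}
    (hb : b ∈ doubleReps cs {x} {y}) :
    Nat.card (Wset cs {x} {y} b) = Nat.card (Wset cs {y} {x} b⁻¹) := by
  have := card_Wset_image_eq cs (swapHom_simple cs hS x y) (Equiv.swap_apply_self x y) {x} {y} b
  rw [Set.image_singleton, Set.image_singleton, Equiv.swap_apply_left, Equiv.swap_apply_right,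
    swapHom_of_mem_doubleReps cs hS hb] at this
  exact this.symm

end RankTwo

theorem statement19_general [Fintype B] (cs : CoxeterSystem M W)
    (hS : Fintype.card B = 2) :
    ∀ (I J : Set B), ∀ b ∈ doubleReps cs I J,
      Nat.card (Wset cs I J b) = Nat.card (Wset cs J I b⁻¹) := by
  rw [← Nat.card_eq_fintype_card] at hS
  rintro I J b ⟨hbI, hbJ⟩
  rw [Set.mem_inv] at hbI
  rcases eq_empty_or_singleton_or_univ hS I with rfl | ⟨x, rfl⟩ | rfl
  · rw [Wset_empty_left cs hbJ, Wset_empty_right,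
      Nat.card_image_of_injective (mul_right_injective b),
      Nat.card_image_of_injective (mul_left_injective b⁻¹)]
  · rcases eq_empty_or_singleton_or_univ hS J with rfl | ⟨y, rfl⟩ | rfl
    · rw [Wset_empty_right, Wset_empty_left cs hbI,
        Nat.card_image_of_injective (mul_left_injective b),
        Nat.card_image_of_injective (mul_right_injective b⁻¹)]
    · exact card_Wset_singleton cs hS ⟨hbI, hbJ⟩
    · obtain rfl : b = 1 := by simpa [minReps_univ] using hbJ
      rw [inv_one, Wset_univ_right, Wset_univ_left]
  · obtain rfl : b = 1 := by simpa [minReps_univ] using hbI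
    rw [inv_one, Wset_univ_left, Wset_univ_right]

/-- For a finite dihedral Coxeter system (`|S| = 2`), the double coset
conjecture holds: `|W(I,J,b)| = |W(J,I,b⁻¹)|` for all `I, J ⊆ S` and `b ∈ X_{IJ}`. -/
theorem statement19 [Fintype W] [Fintype B] (cs : CoxeterSystem M W)
    (hS : Fintype.card B = 2) :
    ∀ (I J : Set B), ∀ b ∈ doubleReps cs I J,
      Nat.card (Wset cs I J b) = Nat.card (Wset cs J I b⁻¹) :=
  statement19_general cs hS
end
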